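/- Let n ≥ 2, p ∈ ℂ, and let 𝓛 be a superoperator on n×n complex matrices with Tr 𝓛(X) = 0 for all X. Then 𝔓(Λ_p ∘ 𝓛) = Λ_p ∘ 𝔓(𝓛) = 𝔓(𝓛) ∘ Λ_p = 𝔓(𝓛 ∘ Λ_p). -/

import Mathlib

open Matrix

/-- The superoperator `X ↦ (Tr X) • I` on `n × n` complex matrices. -/
noncomputable def traceMap (n : ℕ) :
    Matrix (Fin n) (Fin n) ℂ →ₗ[ℂ] Matrix (Fin n) (Fin n) ℂ :=
  (LinearMap.toSpanSingleton ℂ _ (1 : Matrix (Fin n) (Fin n) ℂ)).comp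
    (Matrix.traceLinearMap (Fin n) ℂ ℂ)

/-- The depolarizing superoperator `Λ_p : X ↦ p • X + (1 - p) • (Tr X / n) • I`. -/
noncomputable def depol (n : ℕ) (p : ℂ) :
    Matrix (Fin n) (Fin n) ℂ →ₗ[ℂ] Matrix (Fin n) (Fin n) ℂ :=
  p • LinearMap.id + ((1 - p) / (n : ℂ)) • traceMap n

/-- The superoperator trace `tr Φ = Σ_{k,m} (Φ E_{km})_{km}`. -/
noncomputable def supertrace (n : ℕ)
    (Φ : Matrix (Fin n) (Fin n) ℂ →ₗ[ℂ] Matrix (Fin n) (Fin n) ℂ) : ℂ :=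
  ∑ k : Fin n, ∑ m : Fin n, (Φ (Matrix.single k m 1)) k m

/-- The twirling hyperprojector with respect to the full unitary group. -/
noncomputable def twirl (n : ℕ)
    (Φ : Matrix (Fin n) (Fin n) ℂ →ₗ[ℂ] Matrix (Fin n) (Fin n) ℂ) :
    Matrix (Fin n) (Fin n) ℂ →ₗ[ℂ] Matrix (Fin n) (Fin n) ℂ :=
  ((((n : ℂ) * Matrix.trace (Φ 1) - supertrace n Φ) / ((n : ℂ) * ((n : ℂ) ^ 2 - 1))) •
      traceMap n) +
    ((((n : ℂ) * supertrace n Φ - Matrix.trace (Φ 1)) / ((n : ℂ) * ((n : ℂ) ^ 2 - 1))) •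
      LinearMap.id)


lemma traceMap_apply (n : ℕ) (X : Matrix (Fin n) (Fin n) ℂ) :
    traceMap n X = (Matrix.trace X) • 1 := by
  simp [traceMap, LinearMap.toSpanSingleton]

lemma trace_stdBasis (n : ℕ) (k m : Fin n) :
    Matrix.trace (Matrix.single k m (1:ℂ)) = if k = m then 1 else 0 := by
  rcases eq_or_ne k m with h | h
  · subst h; simp [Matrix.trace_single_eq_same]
  · simp [Matrix.trace_single_eq_of_ne (h := h), h]

lemma depol_apply (n : ℕ) (p : ℂ) (X : Matrix (Fin n) (Fin n) ℂ) :
    depol n p X = p • X + ((1 - p) / (n : ℂ)) • (Matrix.trace X) • 1 := by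
  simp [depol, traceMap_apply]

set_option maxHeartbeats 1000000 in
/-- For trace-annihilating `𝓛`,
`𝔓(Λ_p𝓛) = Λ_p𝔓(𝓛) = 𝔓(𝓛)Λ_p = 𝔓(𝓛Λ_p)`. -/
theorem twirl_depol_traceless (n : ℕ) (hn : 2 ≤ n) (p : ℂ)
    (𝓛 : Matrix (Fin n) (Fin n) ℂ →ₗ[ℂ] Matrix (Fin n) (Fin n) ℂ)
    (h𝓛 : ∀ X, Matrix.trace (𝓛 X) = 0) :
    twirl n (depol n p ∘ₗ 𝓛) = depol n p ∘ₗ twirl n 𝓛 ∧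
    depol n p ∘ₗ twirl n 𝓛 = twirl n 𝓛 ∘ₗ depol n p ∧
    twirl n 𝓛 ∘ₗ depol n p = twirl n (𝓛 ∘ₗ depol n p) := by
  have hn0 : (n : ℂ) ≠ 0 := Nat.cast_ne_zero.mpr (by omega)
  have hn2 : (n : ℂ) ^ 2 - 1 ≠ 0 := by
    rw [sub_ne_zero]
    intro h
    have h' : ((n ^ 2 : ℕ) : ℂ) = ((1 : ℕ) : ℂ) := by push_cast; simpa using h
    have : n ^ 2 = 1 := Nat.cast_injective h'
    nlinarith
  have h1 : Matrix.trace (𝓛 1) = 0 := h𝓛 1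
  have hdiag : ∑ k : Fin n, (𝓛 1) k k = 0 := by
    simpa [Matrix.trace, Matrix.diag] using h1
  have hst1 : supertrace n (depol n p ∘ₗ 𝓛) = p * supertrace n 𝓛 := by
    simp [supertrace, depol_apply, h𝓛, Matrix.add_apply, Matrix.smul_apply,
      Matrix.one_apply, smul_eq_mul, Finset.mul_sum]
  have hst2 : supertrace n (𝓛 ∘ₗ depol n p) = p * supertrace n 𝓛 := by
    have hexp : ∀ k m : Fin n, 𝓛 (depol n p (Matrix.single k m 1)) =
        p • 𝓛 (Matrix.single k m 1) +
          ((1 - p) / (n : ℂ) * (if k = m then 1 else 0)) • 𝓛 1 := by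
      intro k m
      rw [depol_apply, trace_stdBasis, map_add, LinearMap.map_smul,
        LinearMap.map_smul]
      split_ifs with h <;> simp [smul_smul]
    simp only [supertrace, LinearMap.comp_apply, hexp, Matrix.add_apply,
      Matrix.smul_apply, smul_eq_mul]
    simp [Finset.sum_add_distrib, ite_mul, Finset.sum_ite_eq, hdiag,
      ← Finset.mul_sum]
  have htr1 : Matrix.trace ((depol n p ∘ₗ 𝓛) 1) = 0 := by
    simp [depol_apply, h𝓛, Matrix.trace_smul, Matrix.trace_one]
  have htr2 : Matrix.trace ((𝓛 ∘ₗ depol n p) 1) = 0 := h𝓛 _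
  refine ⟨?_, ?_, ?_⟩
  · refine LinearMap.ext fun X => ?_
    ext i j
    simp only [twirl, hst1, htr1, h1, LinearMap.comp_apply, LinearMap.add_apply,
      LinearMap.smul_apply, LinearMap.id_apply, traceMap_apply, depol_apply,
      Matrix.trace_add, Matrix.trace_smul, Matrix.trace_one, Fintype.card_fin, h𝓛,
      Matrix.add_apply, Matrix.smul_apply, Matrix.one_apply, smul_eq_mul]
    set d := (n : ℂ) * ((n : ℂ) ^ 2 - 1) with hdef
    have hd : d ≠ 0 := mul_ne_zero hn0 hn2
    clear_value d
    split_ifs <;> field_simp <;> ring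
  · refine LinearMap.ext fun X => ?_
    ext i j
    simp only [twirl, h1, LinearMap.comp_apply, LinearMap.add_apply,
      LinearMap.smul_apply, LinearMap.id_apply, traceMap_apply, depol_apply,
      Matrix.trace_add, Matrix.trace_smul, Matrix.trace_one, Fintype.card_fin, h𝓛,
      Matrix.add_apply, Matrix.smul_apply, Matrix.one_apply, smul_eq_mul]
    set d := (n : ℂ) * ((n : ℂ) ^ 2 - 1) with hdef
    have hd : d ≠ 0 := mul_ne_zero hn0 hn2
    clear_value d
    split_ifs <;> field_simp <;> ring
  · refine LinearMap.ext fun X => ?_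
    ext i j
    simp only [twirl, hst2, htr2, h1, LinearMap.comp_apply, LinearMap.add_apply,
      LinearMap.smul_apply, LinearMap.id_apply, traceMap_apply, depol_apply,
      Matrix.trace_add, Matrix.trace_smul, Matrix.trace_one, Fintype.card_fin, h𝓛,
      Matrix.add_apply, Matrix.smul_apply, Matrix.one_apply, smul_eq_mul]
    set d := (n : ℂ) * ((n : ℂ) ^ 2 - 1) with hdef
    have hd : d ≠ 0 := mul_ne_zero hn0 hn2
    clear_value d
    split_ifs <;> field_simp <;> ring
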